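/- arXiv:1503.02277 — 2 statements merged into one kernel-verified Lean document; each statement's English description precedes it below -/
import Mathlib

section
/- Let I be a set, 𝓕 a set of filters on I, and 𝓗 a class of topological spaces. A topological space X is 𝓕c-Frolík for 𝓗-spaces (i.e., X × Y is sequencewise 𝓕-compact for every Y ∈ 𝓗) if and only if X is sequencewise (𝓕 ∩ 𝓖)-compact for every 𝓖 ∈ Spec_I(𝓗). -/
universe u

open Filter Topology

/-- A space `X` is sequencewise `𝓕`-compact if every `I`-indexed sequence in `X`
`F`-converges (to some point) for some `F ∈ 𝓕`. -/
def SeqFCompact {I : Type u} (𝓕 : Set (Filter I)) (X : Type u) [TopologicalSpace X] : Prop :=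
  ∀ x : I → X, ∃ F ∈ 𝓕, ∃ p : X, Filter.Tendsto x F (𝓝 p)

/-- The spectrum of a sequence `y : I → Y`: the set of filters on `I` along which `y`
converges to some point of `Y`. -/
def spec {I : Type u} {Y : Type u} [TopologicalSpace Y] (y : I → Y) : Set (Filter I) :=
  {F | ∃ p : Y, Filter.Tendsto y F (𝓝 p)}

/-- The spectrum of a class `H` of topological spaces, relative to the index set `I`. -/
def specI (I : Type u) (H : ∀ Y : Type u, TopologicalSpace Y → Prop) : Set (Set (Filter I)) :=
  {𝓖 | ∃ (Y : Type u) (tY : TopologicalSpace Y) (y : I → Y), H Y tY ∧ 𝓖 = @spec I Y tY y}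

theorem seqFCompact_iff_forall_inter_spec_nonempty {I X : Type u} [TopologicalSpace X]
    (𝓕 : Set (Filter I)) : SeqFCompact 𝓕 X ↔ ∀ x : I → X, (𝓕 ∩ spec x).Nonempty := by
  simp only [SeqFCompact, Set.Nonempty, Set.mem_inter_iff]
  rfl

theorem spec_prodMk {I X Y : Type u} [TopologicalSpace X] [TopologicalSpace Y]
    (x : I → X) (y : I → Y) : spec (fun i => (x i, y i)) = spec x ∩ spec y := by
  ext F
  simp only [spec, Set.mem_ofPred_eq, Set.mem_inter_iff, Prod.exists, nhds_prod_eq,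
    tendsto_prod_iff']
  exact ⟨fun ⟨p, q, hp, hq⟩ => ⟨⟨p, hp⟩, q, hq⟩, fun ⟨⟨p, hp⟩, q, hq⟩ => ⟨p, q, hp, hq⟩⟩

theorem seqFCompact_prod_iff {I X Y : Type u} [TopologicalSpace X] [TopologicalSpace Y]
    (𝓕 : Set (Filter I)) :
    SeqFCompact 𝓕 (X × Y) ↔ ∀ y : I → Y, SeqFCompact (𝓕 ∩ spec y) X := by
  simp only [seqFCompact_iff_forall_inter_spec_nonempty]
  constructor
  · intro h y x
    obtain ⟨F, hF, hxy⟩ := h fun i => (x i, y i)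
    rw [spec_prodMk] at hxy
    exact ⟨F, ⟨hF, hxy.2⟩, hxy.1⟩
  · intro h z
    obtain ⟨F, ⟨hF, hy⟩, hx⟩ := h (fun i => (z i).2) (fun i => (z i).1)
    exact ⟨F, hF, (spec_prodMk _ _).symm.subset ⟨hx, hy⟩⟩

/-- A space `X` is `𝓕c`-Frolík for `𝓗`-spaces iff it is sequencewise `𝓕 ∩ 𝓖`-compact
for every `𝓖 ∈ Spec_I(𝓗)`. -/
theorem frolik_for_class_seqFCompact_iff {I : Type u} (𝓕 : Set (Filter I))
    (H : ∀ Y : Type u, TopologicalSpace Y → Prop) (X : Type u) [TopologicalSpace X] :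
    (∀ (Y : Type u) (tY : TopologicalSpace Y), H Y tY → SeqFCompact 𝓕 (X × Y)) ↔
      (∀ 𝓖 ∈ specI I H, SeqFCompact (𝓕 ∩ 𝓖) X) := by
  simp only [seqFCompact_prod_iff, specI, Set.mem_ofPred_eq]
  constructor
  · rintro h _ ⟨Y, tY, y, hY, rfl⟩
    exact h Y tY hY y
  · intro h Y tY hY y
    exact h _ ⟨Y, tY, y, hY, rfl⟩
end

section
/- For every class 𝓗 of topological spaces and every family 𝐅 = {𝓕_a : a ∈ A} of filter-families (each 𝓕_a a family of filters on a set I_a), one has (𝐅p : 𝓗) = 𝐐p, where 𝐐 = {𝓕_a ∩ 𝓖 : a ∈ A, 𝓖 ∈ PSpec_{I_a}(𝓗)}; that is, a topological space X satisfies X × Y is 𝐅-pseudocompact for every Y ∈ 𝓗 if and only if X is 𝐐-pseudocompact. -/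
universe u

open Filter Topology

/-- `p` is an `F`-limit point of the sequence of sets `O : I → Set X`. -/
def FLimitPt {I : Type u} {X : Type u} [TopologicalSpace X] (F : Filter I)
    (O : I → Set X) (p : X) : Prop :=
  ∀ U ∈ 𝓝 p, {i : I | (O i ∩ U).Nonempty} ∈ F

/-- A space `X` is sequencewise `𝓕`-pseudocompact if every `I`-indexed sequence of
nonempty open subsets of `X` has an `F`-limit point for some `F ∈ 𝓕`. -/
def SeqFPseudocompact {I : Type u} (𝓕 : Set (Filter I)) (X : Type u)
    [TopologicalSpace X] : Prop :=
  ∀ O : I → Set X, (∀ i, IsOpen (O i)) → (∀ i, (O i).Nonempty) →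
    ∃ F ∈ 𝓕, ∃ p : X, FLimitPt F O p

/-- The pseudospectrum of a sequence of sets `O : I → Set Y`. -/
def pspec {I : Type u} {Y : Type u} [TopologicalSpace Y] (O : I → Set Y) : Set (Filter I) :=
  {F | ∃ p : Y, FLimitPt F O p}

/-- The pseudospectrum of a class `H` of topological spaces, relative to `I`. -/
def pspecI (I : Type u) (H : ∀ Y : Type u, TopologicalSpace Y → Prop) :
    Set (Set (Filter I)) :=
  {𝓖 | ∃ (Y : Type u) (tY : TopologicalSpace Y) (O : I → Set Y),
    H Y tY ∧ (∀ i, @IsOpen Y tY (O i)) ∧ (∀ i, (O i).Nonempty) ∧ 𝓖 = @pspec I Y tY O}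

/-!
A sequence of nonempty open sets in `X × Y` may be shrunk to a sequence of nonempty open boxes
`V i ×ˢ W i`, and a point `(p, q)` is an `F`-limit point of the boxes exactly when `p` is an
`F`-limit point of `V` and `q` one of `W`. So `X × Y` is sequencewise `𝓕`-pseudocompact iff for
every sequence `W` of nonempty open sets of `Y`, `X` is sequencewise `𝓕 ∩ PSpec(W, Y)`-pseudocompact;
quantifying over `Y ∈ 𝓗` gives the theorem.
-/

open Set

theorem IsOpen.exists_nonempty_prod_subset {X Y : Type*} [TopologicalSpace X]
    [TopologicalSpace Y] {s : Set (X × Y)} (hs : IsOpen s) (hne : s.Nonempty) :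
    ∃ V : Set X, ∃ W : Set Y, IsOpen V ∧ IsOpen W ∧ V.Nonempty ∧ W.Nonempty ∧ V ×ˢ W ⊆ s := by
  obtain ⟨⟨x, y⟩, hxy⟩ := hne
  obtain ⟨V, W, hV, hW, hxV, hyW, hsub⟩ := isOpen_prod_iff.mp hs x y hxy
  exact ⟨V, W, hV, hW, ⟨x, hxV⟩, ⟨y, hyW⟩, hsub⟩

namespace FLimitPt

variable {I X Y : Type u} [TopologicalSpace X] [TopologicalSpace Y] {F : Filter I}

theorem mono {O O' : I → Set X} {p : X} (hp : FLimitPt F O p) (h : ∀ i, O i ⊆ O' i) :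
    FLimitPt F O' p := fun U hU =>
  F.mem_of_superset (hp U hU) fun i hi => hi.mono (inter_subset_inter_left U (h i))

theorem image {O : I → Set X} {p : X} {f : X → Y} (hp : FLimitPt F O p)
    (hf : ContinuousAt f p) : FLimitPt F (fun i => f '' O i) (f p) := fun _ hU =>
  F.mem_of_superset (hp _ (hf.preimage_mem_nhds hU)) fun _ ⟨x, hxO, hxU⟩ =>
    ⟨f x, mem_image_of_mem f hxO, hxU⟩

theorem prod {V : I → Set X} {W : I → Set Y} {p : X} {q : Y} (hp : FLimitPt F V p)
    (hq : FLimitPt F W q) : FLimitPt F (fun i => V i ×ˢ W i) (p, q) := by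
  intro U hU
  obtain ⟨U₁, hU₁, U₂, hU₂, hsub⟩ := mem_nhds_prod_iff.mp hU
  filter_upwards [hp U₁ hU₁, hq U₂ hU₂] with i ⟨x, hxV, hxU⟩ ⟨y, hyW, hyU⟩
  exact ⟨(x, y), ⟨hxV, hyW⟩, hsub ⟨hxU, hyU⟩⟩

theorem fst {V : I → Set X} {W : I → Set Y} {z : X × Y}
    (hz : FLimitPt F (fun i => V i ×ˢ W i) z) : FLimitPt F V z.1 :=
  (hz.image continuousAt_fst).mono fun i => fst_image_prod_subset (V i) (W i)

theorem snd {V : I → Set X} {W : I → Set Y} {z : X × Y}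
    (hz : FLimitPt F (fun i => V i ×ˢ W i) z) : FLimitPt F W z.2 :=
  (hz.image continuousAt_snd).mono fun i => snd_image_prod_subset (V i) (W i)

end FLimitPt

theorem seqFPseudocompact_prod_iff {I X Y : Type u} [TopologicalSpace X] [TopologicalSpace Y]
    {𝓕 : Set (Filter I)} :
    SeqFPseudocompact 𝓕 (X × Y) ↔ ∀ W : I → Set Y, (∀ i, IsOpen (W i)) → (∀ i, (W i).Nonempty) →
      SeqFPseudocompact (𝓕 ∩ pspec W) X := by
  constructor
  · intro h W hWopen hWne V hVopen hVne
    obtain ⟨F, hF, z, hz⟩ := h (fun i => V i ×ˢ W i) (fun i => (hVopen i).prod (hWopen i))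
      (fun i => (hVne i).prod (hWne i))
    exact ⟨F, ⟨hF, z.2, hz.snd⟩, z.1, hz.fst⟩
  · intro h O hOopen hOne
    choose V W hVopen hWopen hVne hWne hsub using
      fun i => (hOopen i).exists_nonempty_prod_subset (hOne i)
    obtain ⟨F, ⟨hF, q, hq⟩, p, hp⟩ := h W hWopen hWne V hVopen hVne
    exact ⟨F, hF, (p, q), (hp.prod hq).mono hsub⟩

/-- `(𝐅p : 𝓗) = 𝐐p` where `𝐐 = {𝓕_a ∩ 𝓖 : a ∈ A, 𝓖 ∈ PSpec_{I_a}(𝓗)}`: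
`X × Y` is `𝐅`-pseudocompact for every `Y ∈ 𝓗` iff `X` is `𝐐`-pseudocompact. -/
theorem frolik_FPseudocompact_eq_Qp {A : Type u} (I : A → Type u)
    (𝓕 : ∀ a : A, Set (Filter (I a)))
    (H : ∀ Y : Type u, TopologicalSpace Y → Prop)
    (X : Type u) [TopologicalSpace X] :
    (∀ (Y : Type u) (tY : TopologicalSpace Y), H Y tY →
        (∀ a : A, SeqFPseudocompact (𝓕 a) (X × Y))) ↔
      (∀ a : A, ∀ 𝓖 ∈ pspecI (I a) H, SeqFPseudocompact (𝓕 a ∩ 𝓖) X) := by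
  constructor
  · rintro h a _ ⟨Y, tY, W, hY, hWopen, hWne, rfl⟩
    exact seqFPseudocompact_prod_iff.mp (h Y tY hY a) W hWopen hWne
  · intro h Y tY hY a
    exact seqFPseudocompact_prod_iff.mpr fun W hWopen hWne =>
      h a _ ⟨Y, tY, W, hY, hWopen, hWne, rfl⟩
end
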